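/- Fix a real number q > 1 and denote by (α_i) the quasi-greedy expansion of 1 in base q with unbounded digits. The map x ↦ (a_i), where (a_i) denotes the quasi-greedy expansion of x, is a strictly increasing one-to-one correspondence between the interval (0, ∞) and the set of sequences (a_i) of nonnegative integers having infinitely many nonzero terms and satisfying a_{n+1}a_{n+2}... ≤ α_1α_2... (lexicographically) for all n ≥ 1. -/

import Mathlib

/-- Strict lexicographic order on digit sequences (indexed from 0). -/
def LexLt (a b : ℕ → ℕ) : Prop :=
  ∃ n, (∀ k, k < n → a k = b k) ∧ a n < b n

/-- Non-strict lexicographic order on digit sequences. -/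
def LexLe (a b : ℕ → ℕ) : Prop :=
  LexLt a b ∨ a = b

/-- The next quasi-greedy digit with unbounded digits: the largest nonnegative integer `m`
with `s + m / q ^ (n+1) < x`, where `s` is the value of the previously chosen digits. -/
noncomputable def qgDigitU (q x s : ℝ) (n : ℕ) : ℕ :=
  sSup {m : ℕ | s + (m : ℝ) / q ^ (n + 1) < x}

/-- Partial sums of the quasi-greedy expansion of `x` in base `q` with unbounded digits. -/
noncomputable def qgSumU (q x : ℝ) : ℕ → ℝ
  | 0 => 0
  | n + 1 => qgSumU q x n + (qgDigitU q x (qgSumU q x n) n : ℝ) / q ^ (n + 1)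

/-- `quasiGreedyU q x n` is the `(n+1)`-st digit (indexing from 0) of the quasi-greedy
expansion of `x` in base `q` with unbounded digits: recursively, it is the largest
nonnegative integer `a_n` with `a_1/q + ⋯ + a_n/q^n < x`. -/
noncomputable def quasiGreedyU (q x : ℝ) (n : ℕ) : ℕ :=
  qgDigitU q x (qgSumU q x n) n

/-!
The quasi-greedy digits `a` of `x > 0` are characterised by their partial values
`V n = ∑_{i<n} a_i q^-(i+1)`: `V (n+1) < x ≤ V (n+1) + q^-(n+1)` for all `n`. If two digit
sequences first differ at index `n`, the larger one has `V (n+1)` larger by at least `q^-(n+1)`.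
With the characterisation this gives monotonicity, and shows that a sequence with infinitely many
nonzero digits whose partial values stay below `1` is lexicographically at most `α`. Conversely,
the tail condition bounds the partial values of every tail by `1` (induction on the length,
cutting at the first digit below `α`), so `V` converges and `a` is the quasi-greedy expansion of
its limit.
-/

open Finset Filter Topology

lemma lexLt_iff_toLex_lt {a b : ℕ → ℕ} : LexLt a b ↔ toLex a < toLex b := Iff.rfl

lemma lexLe_iff_toLex_le {a b : ℕ → ℕ} : LexLe a b ↔ toLex a ≤ toLex b := by
  rw [le_iff_lt_or_eq, toLex_inj]
  rfl

lemma Set.Infinite.preimage_nat_add {S : Set ℕ} (hS : S.Infinite) (N : ℕ) :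
    ((N + ·) ⁻¹' S).Infinite := by
  refine Set.infinite_of_forall_exists_gt fun n => ?_
  obtain ⟨m, hm, hlt⟩ := hS.exists_gt (N + n)
  exact ⟨m - N, show N + (m - N) ∈ S by rwa [Nat.add_sub_cancel' (by omega)], by omega⟩

noncomputable def partialValue (q : ℝ) (a : ℕ → ℕ) (n : ℕ) : ℝ :=
  ∑ i ∈ range n, (a i : ℝ) / q ^ (i + 1)

variable {q x y s : ℝ} {a b : ℕ → ℕ}

lemma partialValue_succ (n : ℕ) :
    partialValue q a (n + 1) = partialValue q a n + a n / q ^ (n + 1) :=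
  sum_range_succ _ _

lemma partialValue_add (N t : ℕ) :
    partialValue q a (N + t) =
      partialValue q a N + partialValue q (fun i => a (N + i)) t / q ^ N := by
  rw [partialValue, sum_range_add, partialValue, partialValue, sum_div]
  congr 1
  refine sum_congr rfl fun i _ => ?_
  rw [div_div, ← pow_add]
  ring_nf

lemma partialValue_congr {n : ℕ} (h : ∀ k < n, a k = b k) :
    partialValue q a n = partialValue q b n :=
  sum_congr rfl fun k hk => by rw [h k (mem_range.1 hk)]

lemma partialValue_eq_of_forall_ge_eq_zero {N n : ℕ} (h : ∀ k ≥ N, a k = 0) (hn : N ≤ n) :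
    partialValue q a n = partialValue q a N := by
  obtain ⟨t, rfl⟩ := Nat.exists_eq_add_of_le hn
  rw [partialValue_add, add_eq_left, div_eq_zero_iff]
  exact Or.inl (sum_eq_zero fun i _ => by simp [h (N + i) (by omega)])

lemma partialValue_monotone (hq : 0 ≤ q) : Monotone (partialValue q a) :=
  fun _ _ hmn => sum_le_sum_of_subset_of_nonneg (range_subset_range.2 hmn)
    fun _ _ _ => by positivity

lemma partialValue_lt_of_ne_zero (hq : 0 < q) {n m : ℕ} (hm : a m ≠ 0) (hnm : n ≤ m) :
    partialValue q a n < partialValue q a (m + 1) := by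
  have : 0 < (a m : ℝ) / q ^ (m + 1) := by positivity
  rw [partialValue_succ]
  linarith [partialValue_monotone (a := a) hq.le hnm]

lemma partialValue_lt_of_tendsto (hq : 0 < q) (ha : {n | a n ≠ 0}.Infinite)
    (hlim : Tendsto (partialValue q a) atTop (𝓝 x)) (n : ℕ) : partialValue q a n < x := by
  obtain ⟨m, hm, hnm⟩ := ha.exists_gt n
  exact (partialValue_lt_of_ne_zero hq hm hnm.le).trans_le
    ((partialValue_monotone hq.le).ge_of_tendsto hlim _)

lemma partialValue_succ_add_le_of_lt (hq : 0 ≤ q) {n : ℕ} (hagree : ∀ k < n, a k = b k)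
    (hlt : a n < b n) :
    partialValue q a (n + 1) + 1 / q ^ (n + 1) ≤ partialValue q b (n + 1) := by
  have : ((a n : ℝ) + 1) / q ^ (n + 1) ≤ b n / q ^ (n + 1) :=
    div_le_div_of_nonneg_right (by exact_mod_cast hlt) (by positivity)
  rw [add_div] at this
  rw [partialValue_succ, partialValue_succ, partialValue_congr hagree]
  linarith

lemma partialValue_add_le_of_tail_le (hq : 0 ≤ q) {N t : ℕ}
    (h : partialValue q (fun i => a (N + i)) t ≤ 1) :
    partialValue q a (N + t) ≤ partialValue q a N + 1 / q ^ N := by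
  rw [partialValue_add]
  gcongr

lemma partialValue_le_of_tail_le (hq : 0 ≤ q) {N : ℕ}
    (h : ∀ t, partialValue q (fun i => a (N + i)) t ≤ 1) (m : ℕ) :
    partialValue q a m ≤ partialValue q a N + 1 / q ^ N := by
  rcases le_or_gt m N with hmN | hNm
  · have : 0 ≤ 1 / q ^ N := by positivity
    linarith [partialValue_monotone (a := a) hq hmN]
  · obtain ⟨t, rfl⟩ := Nat.exists_eq_add_of_lt hNm
    rw [Nat.add_assoc]
    exact partialValue_add_le_of_tail_le hq (h _)

lemma bddAbove_qgDigitU_set (hq : 0 < q) (n : ℕ) :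
    BddAbove {m : ℕ | s + (m : ℝ) / q ^ (n + 1) < x} := by
  obtain ⟨N, hN⟩ := exists_nat_gt ((x - s) * q ^ (n + 1))
  refine ⟨N, fun m (hm : s + (m : ℝ) / q ^ (n + 1) < x) => ?_⟩
  have : (m : ℝ) < (x - s) * q ^ (n + 1) := by
    rw [← div_lt_iff₀ (by positivity)]
    linarith
  exact_mod_cast (this.trans hN).le

lemma qgDigitU_spec (hq : 0 < q) (hs : s < x) (n : ℕ) :
    s + (qgDigitU q x s n : ℝ) / q ^ (n + 1) < x ∧
      x ≤ s + ((qgDigitU q x s n : ℝ) + 1) / q ^ (n + 1) := by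
  refine ⟨Nat.sSup_mem ⟨0, by simpa using hs⟩ (bddAbove_qgDigitU_set hq n),
    not_lt.1 fun h => ?_⟩
  have : qgDigitU q x s n + 1 ≤ qgDigitU q x s n :=
    le_csSup (bddAbove_qgDigitU_set hq n) (by exact_mod_cast h)
  omega

lemma qgDigitU_eq (hq : 0 < q) {n d : ℕ} (hlt : s + (d : ℝ) / q ^ (n + 1) < x)
    (hle : x ≤ s + ((d : ℝ) + 1) / q ^ (n + 1)) : qgDigitU q x s n = d := by
  have hs : s < x := lt_of_le_of_lt (le_add_of_nonneg_right (by positivity)) hlt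
  obtain ⟨hlt', hle'⟩ := qgDigitU_spec hq hs n
  have hpos : 0 < q ^ (n + 1) := by positivity
  have h₁ : (d : ℝ) < qgDigitU q x s n + 1 := by
    rw [← div_lt_div_iff_of_pos_right hpos]
    linarith
  have h₂ : (qgDigitU q x s n : ℝ) < d + 1 := by
    rw [← div_lt_div_iff_of_pos_right hpos]
    linarith
  have : d < qgDigitU q x s n + 1 := by exact_mod_cast h₁
  have : qgDigitU q x s n < d + 1 := by exact_mod_cast h₂
  omega

lemma qgSumU_eq_partialValue (n : ℕ) :
    qgSumU q x n = partialValue q (quasiGreedyU q x) n := by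
  induction n with
  | zero => rfl
  | succ n ih => rw [partialValue_succ, ← ih]; rfl

lemma partialValue_quasiGreedyU_lt (hq : 0 < q) (hx : 0 < x) (n : ℕ) :
    partialValue q (quasiGreedyU q x) n < x := by
  induction n with
  | zero => exact hx
  | succ n ih =>
    rw [← qgSumU_eq_partialValue] at ih ⊢
    exact (qgDigitU_spec hq ih n).1

lemma quasiGreedyU_eq_iff (hq : 0 < q) (hx : 0 < x) :
    quasiGreedyU q x = a ↔
      ∀ n, partialValue q a (n + 1) < x ∧ x ≤ partialValue q a (n + 1) + 1 / q ^ (n + 1) := by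
  simp only [partialValue_succ, add_assoc, ← add_div]
  constructor
  · rintro rfl n
    have hs := partialValue_quasiGreedyU_lt hq hx n
    rw [← qgSumU_eq_partialValue] at hs ⊢
    exact qgDigitU_spec hq hs n
  · intro h
    funext n
    induction n using Nat.strong_induction_on with
    | _ n ih =>
      rw [quasiGreedyU, qgSumU_eq_partialValue, partialValue_congr ih]
      exact qgDigitU_eq hq (h n).1 (h n).2

lemma tendsto_partialValue_quasiGreedyU (hq : 1 < q) (hx : 0 < x) :
    Tendsto (partialValue q (quasiGreedyU q x)) atTop (𝓝 x) := by
  have hq0 : 0 < q := one_pos.trans hq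
  have hsmall : Tendsto (fun n : ℕ => x - 1 / q ^ (n + 1)) atTop (𝓝 (x - 0)) :=
    tendsto_const_nhds.sub <| tendsto_const_nhds.div_atTop <|
      (tendsto_pow_atTop_atTop_of_one_lt hq).comp (tendsto_add_atTop_nat 1)
  rw [sub_zero] at hsmall
  rw [← tendsto_add_atTop_iff_nat 1]
  refine tendsto_of_tendsto_of_tendsto_of_le_of_le hsmall tendsto_const_nhds (fun n => ?_)
    fun n => (partialValue_quasiGreedyU_lt hq0 hx _).le
  have := ((quasiGreedyU_eq_iff hq0 hx).1 rfl n).2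
  simp only
  linarith

lemma lt_of_lexLt_quasiGreedyU (hq : 0 < q) (hx : 0 < x) (hy : 0 < y)
    (h : LexLt (quasiGreedyU q y) (quasiGreedyU q x)) : y < x := by
  obtain ⟨n, hagree, hlt⟩ := h
  calc y ≤ partialValue q (quasiGreedyU q y) (n + 1) + 1 / q ^ (n + 1) :=
        ((quasiGreedyU_eq_iff hq hy).1 rfl n).2
    _ ≤ partialValue q (quasiGreedyU q x) (n + 1) :=
        partialValue_succ_add_le_of_lt hq.le hagree hlt
    _ < x := partialValue_quasiGreedyU_lt hq hx _

lemma quasiGreedyU_strictMonoOn (hq : 1 < q) :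
    StrictMonoOn (fun x => toLex (quasiGreedyU q x)) (Set.Ioi 0) := by
  intro x (hx : 0 < x) y (hy : 0 < y) hxy
  refine lt_of_not_ge fun hle => ?_
  rcases hle.lt_or_eq with hlt | heq
  · exact (lt_of_lexLt_quasiGreedyU (one_pos.trans hq) hx hy
      (lexLt_iff_toLex_lt.2 hlt)).not_gt hxy
  · refine hxy.ne (tendsto_nhds_unique ?_ (tendsto_partialValue_quasiGreedyU hq hy))
    rw [toLex_inj.1 heq]
    exact tendsto_partialValue_quasiGreedyU hq hx

lemma infinite_quasiGreedyU_ne_zero (hq : 1 < q) (hx : 0 < x) :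
    {n | quasiGreedyU q x n ≠ 0}.Infinite := by
  intro hfin
  obtain ⟨N, hN⟩ := hfin.bddAbove
  have hzero : ∀ k ≥ N + 1, quasiGreedyU q x k = 0 := fun k hk =>
    not_not.1 fun hne => by have := hN hne; omega
  have hconst : Tendsto (partialValue q (quasiGreedyU q x)) atTop
      (𝓝 (partialValue q (quasiGreedyU q x) (N + 1))) :=
    tendsto_const_nhds.congr' <| eventually_atTop.2
      ⟨N + 1, fun n hn => (partialValue_eq_of_forall_ge_eq_zero hzero hn).symm⟩
  have := tendsto_nhds_unique (tendsto_partialValue_quasiGreedyU hq hx) hconst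
  exact (partialValue_quasiGreedyU_lt (one_pos.trans hq) hx (N + 1)).ne this.symm

lemma partialValue_tail_quasiGreedyU_lt_one (hq : 0 < q) (hx : 0 < x) (n t : ℕ) :
    partialValue q (fun i => quasiGreedyU q x (n + 1 + i)) t < 1 := by
  have hlt := partialValue_quasiGreedyU_lt hq hx (n + 1 + t)
  have hle := ((quasiGreedyU_eq_iff hq hx).1 rfl n).2
  rw [partialValue_add] at hlt
  rw [← div_lt_div_iff_of_pos_right (pow_pos hq (n + 1))]
  linarith

lemma lexLe_quasiGreedyU_of_partialValue_le (hq : 0 < q) (hx : 0 < x)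
    (hb : {n | b n ≠ 0}.Infinite) (hbx : ∀ n, partialValue q b n ≤ x) :
    LexLe b (quasiGreedyU q x) := by
  rw [lexLe_iff_toLex_le]
  refine le_of_not_gt fun h => ?_
  obtain ⟨n, hagree, hlt⟩ := lexLt_iff_toLex_lt.2 h
  obtain ⟨m, hm, hnm⟩ := hb.exists_gt n
  have h₁ := partialValue_succ_add_le_of_lt hq.le hagree hlt
  have h₂ := ((quasiGreedyU_eq_iff hq hx).1 rfl n).2
  have h₃ := partialValue_lt_of_ne_zero hq hm hnm
  linarith [hbx (m + 1)]

lemma partialValue_tail_le_one_of_forall_lexLe (hq : 0 < q)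
    (ha : ∀ k, LexLe (fun i => a (k + 1 + i)) (quasiGreedyU q 1)) (n k : ℕ) :
    partialValue q (fun i => a (k + 1 + i)) n ≤ 1 := by
  induction n using Nat.strong_induction_on generalizing k with
  | _ n ih =>
  have hα := partialValue_quasiGreedyU_lt hq one_pos
  rcases ha k with ⟨m, hagree, hlt⟩ | heq
  · rcases le_or_gt n m with hnm | hmn
    · rw [partialValue_congr fun i hi => hagree i (hi.trans_le hnm)]
      exact (hα n).le
    · obtain ⟨t, rfl⟩ : ∃ t, n = m + 1 + t := ⟨n - (m + 1), by omega⟩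
      have htail : partialValue q (fun i => a (k + 1 + (m + 1 + i))) t ≤ 1 := by
        simpa only [Nat.add_assoc] using ih t (by omega) (k + 1 + m)
      calc _ ≤ partialValue q (fun i => a (k + 1 + i)) (m + 1) + 1 / q ^ (m + 1) :=
            partialValue_add_le_of_tail_le hq.le htail
        _ ≤ partialValue q (quasiGreedyU q 1) (m + 1) :=
            partialValue_succ_add_le_of_lt hq.le hagree hlt
        _ ≤ 1 := (hα _).le
  · rw [heq]
    exact (hα n).le

lemma exists_quasiGreedyU_eq (hq : 0 < q) (hinf : {n | a n ≠ 0}.Infinite)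
    (ha : ∀ k, LexLe (fun i => a (k + 1 + i)) (quasiGreedyU q 1)) :
    ∃ x, 0 < x ∧ quasiGreedyU q x = a := by
  have hbound (n m : ℕ) :
      partialValue q a m ≤ partialValue q a (n + 1) + 1 / q ^ (n + 1) :=
    partialValue_le_of_tail_le hq.le (partialValue_tail_le_one_of_forall_lexLe hq ha · n) m
  have hlim := tendsto_atTop_ciSup (partialValue_monotone (a := a) hq.le)
    ⟨_, Set.forall_mem_range.2 (hbound 0)⟩
  have hlt := partialValue_lt_of_tendsto hq hinf hlim
  have hx : 0 < ⨆ n, partialValue q a n := hlt 0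
  exact ⟨_, hx, (quasiGreedyU_eq_iff hq hx).2 fun n =>
    ⟨hlt _, le_of_tendsto' hlim (hbound n)⟩⟩

/-- Theorem 2.5 (b): for fixed `q > 1`, the map `x ↦ (a_i)`, the quasi-greedy expansion
of `x` with unbounded digits, is a strictly increasing one-to-one correspondence between
`(0, ∞)` and the set of infinite sequences of nonnegative integers satisfying
`a_{n+1}a_{n+2}… ≤ α_1α_2…` for all `n`, where `(α_i)` is the quasi-greedy expansion of `1`. -/
theorem quasiGreedyU_bijection (q : ℝ) (hq : 1 < q) :
    (∀ x x' : ℝ, 0 < x → x < x' → LexLt (quasiGreedyU q x) (quasiGreedyU q x')) ∧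
    Set.BijOn (fun x : ℝ => quasiGreedyU q x) (Set.Ioi 0)
      {a : ℕ → ℕ | {n | a n ≠ 0}.Infinite ∧
        ∀ n, LexLe (fun i => a (n + 1 + i)) (quasiGreedyU q 1)} := by
  have hq0 : 0 < q := one_pos.trans hq
  have hmono := quasiGreedyU_strictMonoOn hq
  refine ⟨fun x x' hx hxx' => hmono hx (hx.trans hxx') hxx',
    fun x (hx : 0 < x) => ⟨?_, fun n => ?_⟩,
    fun x hx y hy h => hmono.injOn hx hy (congrArg toLex h), fun a ⟨hinf, ha⟩ => ?_⟩
  · exact infinite_quasiGreedyU_ne_zero hq hx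
  · exact lexLe_quasiGreedyU_of_partialValue_le hq0 one_pos
      ((infinite_quasiGreedyU_ne_zero hq hx).preimage_nat_add _)
      fun t => (partialValue_tail_quasiGreedyU_lt_one hq0 hx n t).le
  · exact exists_quasiGreedyU_eq hq0 hinf ha
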